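/- arXiv:1901.04087 — 2 statements merged into one kernel-verified Lean document; each statement's English description precedes it below -/
import Mathlib

section
/- For every nonzero h ∈ ℂ, the operator Δ̃_h − Δ_h preserves both Im d_h and Im d_h*: (Δ̃_h − Δ_h)(Im d_h) ⊆ Im d_h and (Δ̃_h − Δ_h)(Im d_h*) ⊆ Im d_h*. Consequently the 3-space orthogonal decomposition C^∞_k(X,ℂ) = ker Δ̃_h ⊕ Im d_h ⊕ Im d_h* is stable under Δ̃_h. -/
/-!
`Δ̃_h - Δ_h = A A* + B* B`. On `Im d_h` the second summand vanishes because `B d_h = 0`, and the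
first lands in `Im A ⊆ Im d_h`; symmetrically on `Im d_h*`, using `A* d_h* = 0` and
`Im B* ⊆ Im d_h*`. Since `Δ_h` commutes with `d_h` and `d_h*`, it preserves both images as well,
hence so does `Δ̃_h = (Δ̃_h - Δ_h) + Δ_h`.
-/

namespace LinearMap

variable {R M N : Type*} [Semiring R] [AddCommMonoid M] [AddCommMonoid N] [Module R M] [Module R N]

theorem map_range_le_range_of_comp_eq {f : M →ₗ[R] M} {g : N →ₗ[R] N} {d : N →ₗ[R] M}
    (h : f ∘ₗ d = d ∘ₗ g) : (range d).map f ≤ range d := by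
  rw [← range_comp, h]
  exact range_comp_le_range g d

theorem map_range_le_range_of_comp_eq_zero {P Q S T : M →ₗ[R] M} {d : N →ₗ[R] M}
    (hQ : Q ∘ₗ d = 0) (hP : range P ≤ range d) : (range d).map (P ∘ₗ T + S ∘ₗ Q) ≤ range d := by
  rw [← range_comp, add_comp, comp_assoc d Q S, hQ, comp_zero, add_zero, comp_assoc]
  exact (range_comp_le_range _ _).trans hP

theorem map_add_le_of_map_le {f g : M →ₗ[R] M} {p : Submodule R M}
    (hf : p.map f ≤ p) (hg : p.map g ≤ p) : p.map (f + g) ≤ p := by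
  simp only [← Module.End.mem_invtSubmodule_iff_map_le] at hf hg ⊢
  exact Module.End.invtSubmodule_inf_invtSubmodule_le_invtSubmodule_add f g ⟨hf, hg⟩

end LinearMap

open LinearMap in
theorem tilde_laplacian_stability_general
    {Ω : Type*} [AddCommGroup Ω] [Module ℂ Ω]
    (del delbar p' p'' dhstar Astar Bstar : Ω →ₗ[ℂ] Ω)
    (h : ℂ) :
    let dh : Ω →ₗ[ℂ] Ω := h • del + delbar
    let A : Ω →ₗ[ℂ] Ω := del.comp p'' + h • (delbar.comp p')
    let B : Ω →ₗ[ℂ] Ω := p''.comp del + h • (p'.comp delbar)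
    let Δh : Ω →ₗ[ℂ] Ω := dh.comp dhstar + dhstar.comp dh
    let Δt : Ω →ₗ[ℂ] Ω := A.comp Astar + Bstar.comp B + Δh
    B.comp dh = 0 →
    Astar.comp dhstar = 0 →
    LinearMap.range A ≤ LinearMap.range dh →
    LinearMap.range Bstar ≤ LinearMap.range dhstar →
    Δh.comp dh = dh.comp Δh →
    Δh.comp dhstar = dhstar.comp Δh →
    (Submodule.map (Δt - Δh) (LinearMap.range dh) ≤ LinearMap.range dh) ∧
    (Submodule.map (Δt - Δh) (LinearMap.range dhstar) ≤ LinearMap.range dhstar) ∧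
    (Submodule.map Δt (LinearMap.range dh) ≤ LinearMap.range dh) ∧
    (Submodule.map Δt (LinearMap.range dhstar) ≤ LinearMap.range dhstar) ∧
    (Submodule.map Δt (LinearMap.ker Δt) ≤ LinearMap.ker Δt) := by
  intro dh A B Δh Δt hB hAstar hrangeA hrangeBstar hΔh_dh hΔh_dhstar
  have hdiff : Δt - Δh = A ∘ₗ Astar + Bstar ∘ₗ B := add_sub_cancel_right _ _
  have hdh : (range dh).map (Δt - Δh) ≤ range dh :=
    hdiff ▸ map_range_le_range_of_comp_eq_zero hB hrangeA
  have hdhstar : (range dhstar).map (Δt - Δh) ≤ range dhstar :=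
    hdiff ▸ add_comm (Bstar ∘ₗ B) _ ▸ map_range_le_range_of_comp_eq_zero hAstar hrangeBstar
  refine ⟨hdh, hdhstar, ?_, ?_, Submodule.map_le_iff_le_comap.mpr (ker_le_comap Δt)⟩
  · exact sub_add_cancel Δt Δh ▸
      map_add_le_of_map_le hdh (map_range_le_range_of_comp_eq hΔh_dh)
  · exact sub_add_cancel Δt Δh ▸
      map_add_le_of_map_le hdhstar (map_range_le_range_of_comp_eq hΔh_dhstar)

/-- For every nonzero `h ∈ ℂ`, the operator `Δ̃_h − Δ_h` preserves both
`Im d_h` and `Im d_h*`; consequently the 3-space orthogonal decomposition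
`C^∞_k = ker Δ̃_h ⊕ Im d_h ⊕ Im d_h*` is stable under `Δ̃_h`.
Here `d_h = h∂ + ∂̄`, `Δ_h = d_h d_h* + d_h* d_h`,
`Δ̃_h = A A* + B* B + Δ_h` with `A = ∂p'' + h∂̄p'`, `B = p''∂ + hp'∂̄`; the known
identities `B d_h = 0`, `A* d_h* = 0`, `Im A ⊆ Im d_h`, `Im B* ⊆ Im d_h*`, and the
commutation of `Δ_h` with `d_h`, `d_h*` are hypotheses. -/
theorem tilde_laplacian_stability
    {Ω : Type*} [AddCommGroup Ω] [Module ℂ Ω]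
    (del delbar p' p'' dhstar Astar Bstar : Ω →ₗ[ℂ] Ω)
    (h : ℂ) (hh : h ≠ 0) :
    let dh : Ω →ₗ[ℂ] Ω := h • del + delbar
    let A : Ω →ₗ[ℂ] Ω := del.comp p'' + h • (delbar.comp p')
    let B : Ω →ₗ[ℂ] Ω := p''.comp del + h • (p'.comp delbar)
    let Δh : Ω →ₗ[ℂ] Ω := dh.comp dhstar + dhstar.comp dh
    let Δt : Ω →ₗ[ℂ] Ω := A.comp Astar + Bstar.comp B + Δh
    B.comp dh = 0 →
    Astar.comp dhstar = 0 →
    LinearMap.range A ≤ LinearMap.range dh →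
    LinearMap.range Bstar ≤ LinearMap.range dhstar →
    Δh.comp dh = dh.comp Δh →
    Δh.comp dhstar = dhstar.comp Δh →
    (Submodule.map (Δt - Δh) (LinearMap.range dh) ≤ LinearMap.range dh) ∧
    (Submodule.map (Δt - Δh) (LinearMap.range dhstar) ≤ LinearMap.range dhstar) ∧
    (Submodule.map Δt (LinearMap.range dh) ≤ LinearMap.range dh) ∧
    (Submodule.map Δt (LinearMap.range dhstar) ≤ LinearMap.range dhstar) ∧
    (Submodule.map Δt (LinearMap.ker Δt) ≤ LinearMap.ker Δt) :=
  tilde_laplacian_stability_general del delbar p' p'' dhstar Astar Bstar h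
end

section
/- If γ is a Hermitian metric of dimension n with ∂γ^{n−1} E_r-exact for some r ≥ 1, then ∂γ^{n−1} is already E_3-exact. More precisely, in bidegree (n, n−1), the tower of E_r-exactness conditions reduces to: ∂γ^{n−1} = ∂̄Γ + ∂ζ with ∂̄ζ = ∂v and ∂̄v = 0 for some forms Γ of type (n, n−2), ζ of type (n−1,n−1), v of type (n−2, n). -/
/-! In bidegree `(n, n−1)` the last form `v_{r−3}` of the tower has type `(n−2, n)`, so
`∂̄v_{r−3}` vanishes for degree reasons and `(ξ, ζ, v_{r−3})` already witnesses
`E_3`-exactness. -/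

theorem delbar_eq_zero_of_mem_top {R Ω : Type*} [Semiring R] [AddCommMonoid Ω] [Module R Ω]
    {n : ℤ} {𝒜 : ℤ × ℤ → Submodule R Ω} (htop : ∀ p q : ℤ, (n < p ∨ n < q) → 𝒜 (p, q) = ⊥)
    (delbar : Ω → Ω) (hdelbar : ∀ (p q : ℤ) (x : Ω), x ∈ 𝒜 (p, q) → delbar x ∈ 𝒜 (p, q + 1))
    {p : ℤ} {x : Ω} (hx : x ∈ 𝒜 (p, n)) : delbar x = 0 := by
  have h := hdelbar p n x hx
  rwa [htop p (n + 1) (Or.inr (lt_add_one n)), Submodule.mem_bot] at h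

theorem ErsG_reduces_to_E3sG_general
    {Ω : Type*} [AddCommGroup Ω] [Module ℂ Ω]
    (n : ℤ)
    (𝒜 : ℤ × ℤ → Submodule ℂ Ω)
    (htop : ∀ p q : ℤ, (n < p ∨ n < q) → 𝒜 (p, q) = ⊥)
    (del delbar : Ω →ₗ[ℂ] Ω)
    (hdelbar : ∀ (p q : ℤ) (x : Ω), x ∈ 𝒜 (p, q) → delbar x ∈ 𝒜 (p, q + 1))
    (g : Ω)
    (r : ℕ)
    (hex : ∃ (ζ ξ : Ω) (v : ℤ → Ω),
        ζ ∈ 𝒜 (n - 1, n - 1) ∧ ξ ∈ 𝒜 (n, n - 2) ∧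
        (∀ l : ℤ, v l ∈ 𝒜 (n - (r : ℤ) + 1 + l, (n - 1) + (r : ℤ) - 2 - l)) ∧
        (∀ l : ℤ, l < 0 → v l = 0) ∧
        del g = del ζ + delbar ξ ∧
        (r = 1 → ζ = 0) ∧
        delbar ζ = del (v ((r : ℤ) - 3)) ∧
        (∀ j : ℤ, 1 ≤ j → j ≤ (r : ℤ) - 3 → delbar (v j) = del (v (j - 1))) ∧
        delbar (v 0) = 0) :
    ∃ Γ ζ v : Ω,
      Γ ∈ 𝒜 (n, n - 2) ∧ ζ ∈ 𝒜 (n - 1, n - 1) ∧ v ∈ 𝒜 (n - 2, n) ∧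
      del g = delbar Γ + del ζ ∧ delbar ζ = del v ∧ delbar v = 0 := by
  obtain ⟨ζ, ξ, v, hζ, hξ, hv, -, hdg, -, hdbζ, -, -⟩ := hex
  have hvtype : v ((r : ℤ) - 3) ∈ 𝒜 (n - 2, n) := by
    have h := hv ((r : ℤ) - 3)
    rwa [show n - r + 1 + (r - 3) = n - 2 by ring, show n - 1 + r - 2 - (r - 3) = n by ring] at h
  refine ⟨ξ, ζ, v ((r : ℤ) - 3), hξ, hζ, hvtype, by rw [hdg, add_comm], hdbζ, ?_⟩
  exact delbar_eq_zero_of_mem_top htop delbar hdelbar hvtype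

/-- If `γ` is a Hermitian metric on an `n`-dimensional compact complex
manifold with `∂γ^{n−1}` `E_r`-exact for some `r ≥ 1`, then `∂γ^{n−1}` is already
`E_3`-exact: there exist `Γ ∈ 𝒜 (n, n−2)`, `ζ ∈ 𝒜 (n−1, n−1)`, `v ∈ 𝒜 (n−2, n)` with
`∂γ^{n−1} = ∂̄Γ + ∂ζ`, `∂̄ζ = ∂v`, `∂̄v = 0`.
Forms are modelled by a ℂ-module bigraded by `𝒜 : ℤ × ℤ → Submodule ℂ Ω`, with pieces of
bidegree exceeding `n` in either index vanishing; `g` stands for `γ^{n−1} ∈ 𝒜 (n−1,n−1)`;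
the typed `E_r`-exactness hypothesis is spelled out as in the paper. -/
theorem ErsG_reduces_to_E3sG
    {Ω : Type*} [AddCommGroup Ω] [Module ℂ Ω]
    (n : ℤ)
    (𝒜 : ℤ × ℤ → Submodule ℂ Ω)
    (htop : ∀ p q : ℤ, (n < p ∨ n < q) → 𝒜 (p, q) = ⊥)
    (del delbar : Ω →ₗ[ℂ] Ω)
    (hdel : ∀ (p q : ℤ) (x : Ω), x ∈ 𝒜 (p, q) → del x ∈ 𝒜 (p + 1, q))
    (hdelbar : ∀ (p q : ℤ) (x : Ω), x ∈ 𝒜 (p, q) → delbar x ∈ 𝒜 (p, q + 1))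
    (g : Ω) (hg : g ∈ 𝒜 (n - 1, n - 1))
    (r : ℕ) (hr : 1 ≤ r)
    (hex : ∃ (ζ ξ : Ω) (v : ℤ → Ω),
        ζ ∈ 𝒜 (n - 1, n - 1) ∧ ξ ∈ 𝒜 (n, n - 2) ∧
        (∀ l : ℤ, v l ∈ 𝒜 (n - (r : ℤ) + 1 + l, (n - 1) + (r : ℤ) - 2 - l)) ∧
        (∀ l : ℤ, l < 0 → v l = 0) ∧
        del g = del ζ + delbar ξ ∧
        (r = 1 → ζ = 0) ∧
        delbar ζ = del (v ((r : ℤ) - 3)) ∧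
        (∀ j : ℤ, 1 ≤ j → j ≤ (r : ℤ) - 3 → delbar (v j) = del (v (j - 1))) ∧
        delbar (v 0) = 0) :
    ∃ Γ ζ v : Ω,
      Γ ∈ 𝒜 (n, n - 2) ∧ ζ ∈ 𝒜 (n - 1, n - 1) ∧ v ∈ 𝒜 (n - 2, n) ∧
      del g = delbar Γ + del ζ ∧ delbar ζ = del v ∧ delbar v = 0 :=
  ErsG_reduces_to_E3sG_general n 𝒜 htop del delbar hdelbar g r hex
end
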